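/- arXiv:math/0502260 — 3 statements merged into one kernel-verified Lean document; each statement's English description precedes it below -/
import Mathlib

section
/- If an m×n integer matrix B̃ (rows indexed by [1,m], columns by an n-element subset ex ⊆ [1,m]) is compatible with a skew-symmetric integer m×m matrix Λ, i.e. there exist positive integers d_j (j ∈ ex) with ∑_{k=1}^m b_{kj} λ_{ki} = δ_{ij} d_j for all j ∈ ex and i ∈ [1,m], then d_i b_{ij} = - d_j b_{ji} for all i, j ∈ ex; in particular the principal part of B̃ is skew-symmetrizable. -/
/-- Compatibility of an `m × n` matrix `B` (rows `[1,m]`, columns an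
`n`-element subset `ex ⊆ [1,m]`, encoded by an injection `ex : Fin n → Fin m`) with a
skew-symmetric `m × m` matrix `Λ` implies `d_i b_{ij} = - d_j b_{ji}` for `i, j ∈ ex`,
i.e. the principal part of `B` is skew-symmetrizable. -/
theorem compatible_implies_skew_symmetrizable
    (m n : ℕ) (B : Matrix (Fin m) (Fin n) ℤ) (Λ : Matrix (Fin m) (Fin m) ℤ)
    (ex : Fin n → Fin m) (hex : Function.Injective ex)
    (hΛ : Λ.transpose = -Λ)
    (d : Fin n → ℤ) (hd : ∀ j, 0 < d j)
    (hcompat : ∀ (j : Fin n) (i : Fin m),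
      ∑ k, B k j * Λ k i = if i = ex j then d j else 0) :
    ∀ i j : Fin n, d i * B (ex i) j = -(d j * B (ex j) i) := by
  intro i j
  have hskew : ∀ a b : Fin m, Λ a b = -Λ b a := by
    intro a b
    have := congrFun (congrFun hΛ b) a
    simpa [Matrix.transpose_apply] using this
  have h1 : d i * B (ex i) j = ∑ l, (∑ k, B k i * Λ k l) * B l j := by
    simp_rw [hcompat i, ite_mul, zero_mul]
    rw [Finset.sum_ite_eq' Finset.univ (ex i) (fun l => d i * B l j)]
    simp
  have h2 : d j * B (ex j) i = ∑ k, (∑ l, B l j * Λ l k) * B k i := by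
    simp_rw [hcompat j, ite_mul, zero_mul]
    rw [Finset.sum_ite_eq' Finset.univ (ex j) (fun k => d j * B k i)]
    simp
  rw [h1, h2]
  simp_rw [Finset.sum_mul]
  rw [Finset.sum_comm, ← Finset.sum_neg_distrib]
  refine Finset.sum_congr rfl fun k _ => ?_
  rw [← Finset.sum_neg_distrib]
  refine Finset.sum_congr rfl fun l _ => ?_
  rw [hskew l k]
  ring
end

section
/- Let m = 2n, ex = [1,n], and B̃ be the 2n×n matrix with top block an n×n skew-symmetrizable integer matrix B (with skew-symmetrizer D = diag(d_1,…,d_n), d_i > 0, so DB skew-symmetric) and bottom block the n×n identity. Then a skew-symmetric integer 2n×2n matrix Λ is compatible with B̃ (with the same d_j) if and only if Λ has the block form Λ = [[Λ₀, −D − Λ₀B], [D − BᵀΛ₀, −DB + BᵀΛ₀B]] for some skew-symmetric integer n×n matrix Λ₀. -/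
/-- For `m = 2n`, `ex = [1,n]` (the `inl` copy), and
`B̃ = (B over I)` with `B` skew-symmetrizable via `D = diag d`, a skew-symmetric
integer `2n × 2n` matrix `Λ` is compatible with `B̃` (with the same `d`) iff
`Λ = [[Λ₀, -D - Λ₀B], [D - BᵀΛ₀, -DB + BᵀΛ₀B]]` for some skew-symmetric `Λ₀`. -/
theorem compatible_lambda_principal_coeffs
    (n : ℕ) (B : Matrix (Fin n) (Fin n) ℤ)
    (d : Fin n → ℤ) (hd : ∀ i, 0 < d i)
    (hskew : (Matrix.diagonal d * B).transpose = -(Matrix.diagonal d * B))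
    (Λ : Matrix (Fin n ⊕ Fin n) (Fin n ⊕ Fin n) ℤ) :
    (Λ.transpose = -Λ ∧
      ∀ (j : Fin n) (i : Fin n ⊕ Fin n),
        ∑ k, (Matrix.of fun (p : Fin n ⊕ Fin n) (j' : Fin n) =>
          Sum.elim (fun i' => B i' j') (fun i' => if i' = j' then (1 : ℤ) else 0) p) k j
            * Λ k i = if i = Sum.inl j then d j else 0)
    ↔ ∃ Λ₀ : Matrix (Fin n) (Fin n) ℤ, Λ₀.transpose = -Λ₀ ∧
        Λ = Matrix.fromBlocks Λ₀ (-(Matrix.diagonal d) - Λ₀ * B)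
              (Matrix.diagonal d - B.transpose * Λ₀)
              (-(Matrix.diagonal d * B) + B.transpose * Λ₀ * B) := by
  classical
  have hB : ∀ i j, d j * B j i = -(d i * B i j) := by
    intro i j
    have := congrFun (congrFun hskew i) j
    simpa [Matrix.diagonal_mul] using this
  constructor
  · rintro ⟨hΛ, hc⟩
    have hΛp : ∀ p q, Λ q p = -Λ p q := by
      intro p q
      have := congrFun (congrFun hΛ p) q
      simpa using this
    have key : ∀ (j : Fin n) (i : Fin n ⊕ Fin n),
        Λ (Sum.inr j) i
          = (if i = Sum.inl j then d j else 0) - ∑ k, B k j * Λ (Sum.inl k) i := by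
      intro j i
      have h := hc j i
      rw [Fintype.sum_sum_type] at h
      simp only [Matrix.of_apply, Sum.elim_inl, Sum.elim_inr, ite_mul, one_mul,
        zero_mul, Finset.sum_ite_eq', Finset.mem_univ, if_true] at h
      linarith
    refine ⟨Matrix.of fun i j => Λ (Sum.inl i) (Sum.inl j), ?_, ?_⟩
    · ext i j
      simp [hΛp (Sum.inl i) (Sum.inl j)]
    · ext p q
      have hsum : ∀ i j : Fin n,
          ∑ k, B k j * Λ (Sum.inl k) (Sum.inl i)
            = -∑ k, Λ (Sum.inl i) (Sum.inl k) * B k j := by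
        intro i j
        rw [← Finset.sum_neg_distrib]
        refine Finset.sum_congr rfl fun k _ => ?_
        rw [hΛp (Sum.inl k) (Sum.inl i)]; ring
      rcases p with i | i <;> rcases q with j | j
      · simp [Matrix.fromBlocks]
      · -- inl i, inr j
        rw [hΛp (Sum.inr j) (Sum.inl i), key]
        simp only [Matrix.fromBlocks_apply₁₂, Matrix.sub_apply, Matrix.neg_apply,
          Matrix.mul_apply, Matrix.of_apply, Matrix.diagonal_apply, Sum.inl.injEq]
        rw [hsum]
        by_cases hij : i = j
        · subst hij; ring
        · simp only [hij, Ne.symm hij, if_false]; ring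
      · -- inr i, inl j
        rw [key]
        simp only [Matrix.fromBlocks_apply₂₁, Matrix.sub_apply, Matrix.mul_apply,
          Matrix.of_apply, Matrix.diagonal_apply, Matrix.transpose_apply, Sum.inl.injEq]
        by_cases hij : j = i
        · subst hij; simp
        · simp only [hij, Ne.symm hij, if_false]
      · -- inr i, inr j
        rw [key]
        simp only [Matrix.fromBlocks_apply₂₂, Matrix.add_apply, Matrix.neg_apply,
          Matrix.mul_apply, Matrix.of_apply, Matrix.transpose_apply, reduceCtorEq,
          if_false, Matrix.diagonal_apply, ite_mul, zero_mul, Finset.sum_ite_eq,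
          Finset.mem_univ, if_true]
        have hchain : (0:ℤ) - ∑ k, B k i * Λ (Sum.inl k) (Sum.inr j)
            = -(d i * B i j)
              + ∑ k, (∑ l, B l i * Λ (Sum.inl l) (Sum.inl k)) * B k j := by
          calc (0:ℤ) - ∑ k, B k i * Λ (Sum.inl k) (Sum.inr j)
              = ∑ k, B k i * Λ (Sum.inr j) (Sum.inl k) := by
                rw [zero_sub, ← Finset.sum_neg_distrib]
                exact Finset.sum_congr rfl fun k _ => by
                  rw [hΛp (Sum.inr j) (Sum.inl k)]; ring
            _ = ∑ k, B k i * ((if k = j then d j else 0)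
                  - ∑ l, B l j * Λ (Sum.inl l) (Sum.inl k)) := by
                refine Finset.sum_congr rfl fun k _ => ?_
                rw [key j (Sum.inl k)]
                simp
            _ = B j i * d j
                - ∑ k, ∑ l, B k i * (B l j * Λ (Sum.inl l) (Sum.inl k)) := by
                simp only [mul_sub, mul_ite, mul_zero, Finset.sum_sub_distrib,
                  Finset.sum_ite_eq', Finset.mem_univ, if_true, Finset.mul_sum]
            _ = -(d i * B i j)
                + ∑ k, (∑ l, B l i * Λ (Sum.inl l) (Sum.inl k)) * B k j := by
                have hs : ∑ k, ∑ l, B k i * (B l j * Λ (Sum.inl l) (Sum.inl k))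
                    = -∑ k, (∑ l, B l i * Λ (Sum.inl l) (Sum.inl k)) * B k j := by
                  rw [Finset.sum_comm, ← Finset.sum_neg_distrib]
                  refine Finset.sum_congr rfl fun l _ => ?_
                  rw [Finset.sum_mul, ← Finset.sum_neg_distrib]
                  refine Finset.sum_congr rfl fun k _ => ?_
                  rw [hΛp (Sum.inl k) (Sum.inl l)]; ring
                rw [hs]
                linear_combination hB i j
        exact hchain
  · rintro ⟨Λ₀, hΛ₀, rfl⟩
    have hBD : B.transpose * Matrix.diagonal d = -(Matrix.diagonal d * B) := by
      have h := hskew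
      rw [Matrix.transpose_mul, Matrix.diagonal_transpose] at h
      exact h
    constructor
    · have e12 : (Matrix.diagonal d - B.transpose * Λ₀).transpose
          = -(-(Matrix.diagonal d) - Λ₀ * B) := by
        rw [Matrix.transpose_sub, Matrix.transpose_mul, Matrix.transpose_transpose,
          Matrix.diagonal_transpose, hΛ₀]
        noncomm_ring
      have e21 : (-(Matrix.diagonal d) - Λ₀ * B).transpose
          = -(Matrix.diagonal d - B.transpose * Λ₀) := by
        rw [Matrix.transpose_sub, Matrix.transpose_mul, Matrix.transpose_neg,
          Matrix.diagonal_transpose, hΛ₀]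
        noncomm_ring
      have e22 : (-(Matrix.diagonal d * B) + B.transpose * Λ₀ * B).transpose
          = -(-(Matrix.diagonal d * B) + B.transpose * Λ₀ * B) := by
        rw [Matrix.transpose_add, Matrix.transpose_neg, Matrix.transpose_mul,
          Matrix.transpose_mul, Matrix.transpose_mul, Matrix.transpose_transpose,
          Matrix.diagonal_transpose, hΛ₀, hBD]
        noncomm_ring
      rw [Matrix.fromBlocks_transpose, Matrix.fromBlocks_neg, hΛ₀, e12, e21, e22]
    · intro j i
      rw [Fintype.sum_sum_type]
      simp only [Matrix.of_apply, Sum.elim_inl, Sum.elim_inr, ite_mul, one_mul,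
        zero_mul, Finset.sum_ite_eq', Finset.mem_univ, if_true]
      rcases i with i | i
      · simp only [Matrix.fromBlocks_apply₁₁, Matrix.fromBlocks_apply₂₁,
          Matrix.sub_apply, Matrix.mul_apply, Matrix.diagonal_apply,
          Matrix.transpose_apply, Sum.inl.injEq]
        by_cases hij : i = j
        · subst hij; simp
        · simp only [hij, Ne.symm hij, if_false]
          try ring
      · simp only [Matrix.fromBlocks_apply₁₂, Matrix.fromBlocks_apply₂₂,
          Matrix.sub_apply, Matrix.neg_apply, Matrix.add_apply, Matrix.mul_apply,
          Matrix.diagonal_apply, Matrix.transpose_apply, reduceCtorEq, if_false]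
        have e1 : ∑ x, B x j * ((-if x = i then d x else 0) - ∑ l, Λ₀ x l * B l i)
            = -(B i j * d i) - ∑ k, ∑ l, B k j * (Λ₀ k l * B l i) := by
          simp only [mul_sub, mul_neg, mul_ite, mul_zero, Finset.sum_sub_distrib,
            Finset.sum_neg_distrib, Finset.sum_ite_eq', Finset.mem_univ, if_true,
            Finset.mul_sum]
          try ring
        have e2 : ∑ x, (if j = x then d j else 0) * B x i = d j * B j i := by
          simp [ite_mul]
        have e3 : ∑ x, (∑ y, B y j * Λ₀ y x) * B x i
            = ∑ k, ∑ l, B k j * (Λ₀ k l * B l i) := by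
          simp only [Finset.sum_mul]
          rw [Finset.sum_comm]
          refine Finset.sum_congr rfl fun l _ => ?_
          exact Finset.sum_congr rfl fun k _ => by ring
        rw [e1, e2, e3]
        linear_combination -hB i j
end

section
/- In the quantum torus with compatible (Λ, B̃), the element X'_k from the quantum exchange relation quasi-commutes with X_i for every i ≠ k: X'_k X_i = q^{λ'} X_i X'_k where λ' = Λ(a, e_i) is the same for both monomials a = a⁺ and a = a⁻ appearing in X'_k, since Λ(a⁺ − a⁻, e_i) = Λ(b^k, e_i) = 0 for i ≠ k by compatibility. -/
/-- The quantum-torus monomial `X^a` (with `s = q^{1/2}`). -/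
def quantumMonomial {F : Type*} [Ring F] {m : ℕ} (s : Fˣ)
    (Λ : Matrix (Fin m) (Fin m) ℤ) (X : Fin m → Fˣ) (a : Fin m → ℤ) : Fˣ :=
  s ^ (∑ p ∈ Finset.univ.filter (fun p : Fin m × Fin m => p.2 < p.1),
        Λ p.1 p.2 * (a p.1 * a p.2)) *
    ((List.finRange m).map (fun i => X i ^ a i)).prod

/-- The skew bilinear form `Λ(a,b) = ∑_{i,j} λ_{ij} a_i b_j`. -/
def lambdaForm {m : ℕ} (Λ : Matrix (Fin m) (Fin m) ℤ) (a b : Fin m → ℤ) : ℤ :=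
  ∑ i, ∑ j, Λ i j * (a i * b j)

section Aux

/-- In a group, if `c` is central and `a * b = c * (b * a)`, then
`a ^ t * b = c ^ t * (b * a ^ t)` for every integer `t`. -/
lemma zpow_quasi_comm {G : Type*} [Group G] (a b c : G) (hc : ∀ x, Commute c x)
    (h : a * b = c * (b * a)) : ∀ t : ℤ, a ^ t * b = c ^ t * (b * a ^ t) := by
  have hnat : ∀ (a c : G), (∀ x, Commute c x) → a * b = c * (b * a) →
      ∀ n : ℕ, a ^ n * b = c ^ n * (b * a ^ n) := by
    intro a c hc h n
    induction n with
    | zero => simp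
    | succ n ih =>
      calc a ^ (n+1) * b = a ^ n * (a * b) := by rw [pow_succ, mul_assoc]
        _ = a ^ n * (c * (b * a)) := by rw [h]
        _ = c * (a ^ n * (b * a)) := by rw [← mul_assoc, ← (hc _).eq, mul_assoc]
        _ = c * ((a ^ n * b) * a) := by rw [mul_assoc]
        _ = c * ((c ^ n * (b * a ^ n)) * a) := by rw [ih]
        _ = c ^ (n+1) * (b * a ^ (n+1)) := by rw [pow_succ c, pow_succ a]; group
  have hinv : a⁻¹ * b = c⁻¹ * (b * a⁻¹) := by
    have : b * a⁻¹ = a⁻¹ * (a * b) * a⁻¹ := by group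
    rw [h, ← mul_assoc, ← (hc a⁻¹).eq] at this
    rw [this]; group
  intro t
  cases t with
  | ofNat n => simpa using hnat a c hc h n
  | negSucc n =>
    have := hnat a⁻¹ c⁻¹ (fun x => (hc x).inv_left) hinv (n + 1)
    simpa [zpow_negSucc, inv_pow] using this

variable {F : Type*} [Ring F] {m : ℕ}

lemma list_prod_quasi (s : Fˣ) (hcs : ∀ u : Fˣ, Commute s u)
    (Λ : Matrix (Fin m) (Fin m) ℤ) (X : Fin m → Fˣ)
    (hXu : ∀ i j, X i * X j = s ^ (2 * Λ i j) * (X j * X i))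
    (a : Fin m → ℤ) (i : Fin m) (L : List (Fin m)) :
    ((L.map fun j => X j ^ a j).prod) * X i
      = s ^ (2 * (L.map fun j => Λ j i * a j).sum) * (X i * (L.map fun j => X j ^ a j).prod) := by
  have helem : ∀ j : Fin m, X j ^ a j * X i = s ^ (2 * (Λ j i * a j)) * (X i * X j ^ a j) := by
    intro j
    have := zpow_quasi_comm (X j) (X i) (s ^ (2 * Λ j i))
      (fun x => (hcs x).zpow_left _) (hXu j i) (a j)
    rw [this, ← zpow_mul]
    ring_nf
  induction L with
  | nil => simp
  | cons j L ih =>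
    simp only [List.map_cons, List.prod_cons, List.sum_cons]
    calc (X j ^ a j * (L.map fun j => X j ^ a j).prod) * X i
        = X j ^ a j * ((L.map fun j => X j ^ a j).prod * X i) := by rw [mul_assoc]
      _ = X j ^ a j * (s ^ (2 * (L.map fun j => Λ j i * a j).sum)
            * (X i * (L.map fun j => X j ^ a j).prod)) := by rw [ih]
      _ = s ^ (2 * (L.map fun j => Λ j i * a j).sum)
            * ((X j ^ a j * X i) * (L.map fun j => X j ^ a j).prod) := by
          rw [← mul_assoc, ← ((hcs _).zpow_left _).eq, mul_assoc, mul_assoc]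
      _ = s ^ (2 * (L.map fun j => Λ j i * a j).sum)
            * ((s ^ (2 * (Λ j i * a j)) * (X i * X j ^ a j))
                * (L.map fun j => X j ^ a j).prod) := by rw [helem]
      _ = _ := by
          rw [← mul_assoc, ← mul_assoc, ← zpow_add, ← mul_add, mul_assoc, mul_assoc,
            Int.add_comm ((L.map fun j => Λ j i * a j).sum)]

lemma monomial_quasi (s : Fˣ) (hcs : ∀ u : Fˣ, Commute s u)
    (Λ : Matrix (Fin m) (Fin m) ℤ) (X : Fin m → Fˣ)
    (hXu : ∀ i j, X i * X j = s ^ (2 * Λ i j) * (X j * X i))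
    (a : Fin m → ℤ) (i : Fin m) :
    quantumMonomial s Λ X a * X i
      = s ^ (2 * ∑ j, Λ j i * a j) * (X i * quantumMonomial s Λ X a) := by
  unfold quantumMonomial
  rw [mul_assoc, list_prod_quasi s hcs Λ X hXu a i, ← Fin.sum_univ_def]
  rw [← mul_assoc, ((hcs _).zpow_left _).eq, mul_assoc]
  congr 1
  rw [← mul_assoc, ((hcs (X i)).zpow_left _).eq, mul_assoc]

lemma lambdaForm_single (Λ : Matrix (Fin m) (Fin m) ℤ) (a : Fin m → ℤ) (i : Fin m) :
    lambdaForm Λ a (fun i' => if i' = i then 1 else 0) = ∑ j, Λ j i * a j := by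
  unfold lambdaForm
  refine Finset.sum_congr rfl fun x _ => ?_
  rw [Finset.sum_eq_single i]
  · simp
  · intro b _ hb; simp [hb]
  · simp

end Aux

/-- With `(Λ, B̃)` compatible (`∑_l b_{lk} λ_{li} = -δ_{ik} d_k`), the
element `X'_k = X^{a⁺} + X^{a⁻}` of the quantum exchange relation quasi-commutes with
every `X_i`, `i ≠ k`: `X'_k X_i = q^{λ'} X_i X'_k` with `λ' = Λ(a⁺, e_i) = Λ(a⁻, e_i)`
(since `Λ(a⁺ - a⁻, e_i) = Λ(b^k, e_i) = 0` for `i ≠ k`). Here `q = s^2`. -/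
theorem exchange_element_quasi_commutes
    (F : Type*) [Ring F] (m n : ℕ) (s : Fˣ) (hs : ∀ x : F, (s : F) * x = x * s)
    (Λ : Matrix (Fin m) (Fin m) ℤ) (hΛ : Λ.transpose = -Λ)
    (X : Fin m → Fˣ)
    (hX : ∀ i j, (X i : F) * X j = ((s ^ (2 * Λ i j) : Fˣ) : F) * ((X j : F) * X i))
    (B : Matrix (Fin m) (Fin n) ℤ)
    (ex : Fin n → Fin m) (hex : Function.Injective ex)
    (d : Fin n → ℤ) (hd : ∀ j, 0 < d j)
    (hcompat : ∀ (k : Fin n) (i : Fin m),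
      ∑ l, B l k * Λ l i = -(if i = ex k then d k else 0))
    (k : Fin n) :
    let aplus : Fin m → ℤ := fun i => (if i = ex k then -1 else 0) + max (B i k) 0
    let aminus : Fin m → ℤ := fun i => (if i = ex k then -1 else 0) - min (B i k) 0
    let e : Fin m → Fin m → ℤ := fun i i' => if i' = i then 1 else 0
    let X'k : F := (quantumMonomial s Λ X aplus : Fˣ) + (quantumMonomial s Λ X aminus : Fˣ)
    ∀ i : Fin m, i ≠ ex k →
      lambdaForm Λ aplus (e i) = lambdaForm Λ aminus (e i) ∧
      X'k * (X i : F)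
        = ((s ^ (2 * lambdaForm Λ aplus (e i)) : Fˣ) : F) * ((X i : F) * X'k) := by
  intro aplus aminus e X'k i hi
  have hcs : ∀ u : Fˣ, Commute s u := fun u => Units.ext (by
    simpa [Units.val_mul] using hs (u : F))
  have hXu : ∀ i j, X i * X j = s ^ (2 * Λ i j) * (X j * X i) := fun i j =>
    Units.ext (by simpa [Units.val_mul] using hX i j)
  -- equality of the two exponents
  have heq : lambdaForm Λ aplus (e i) = lambdaForm Λ aminus (e i) := by
    have h1 : lambdaForm Λ aplus (e i) = ∑ j, Λ j i * aplus j := lambdaForm_single Λ aplus i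
    have h2 : lambdaForm Λ aminus (e i) = ∑ j, Λ j i * aminus j := lambdaForm_single Λ aminus i
    rw [h1, h2, ← sub_eq_zero, ← Finset.sum_sub_distrib]
    have hterm : ∀ j ∈ Finset.univ, Λ j i * aplus j - Λ j i * aminus j = B j k * Λ j i := by
      intro j _
      have hmm : min (B j k) 0 + max (B j k) 0 = B j k := by
        simpa using min_add_max (B j k) 0
      rw [← mul_sub]
      simp only [aplus, aminus]
      rw [show ((if j = ex k then (-1 : ℤ) else 0) + max (B j k) 0)
            - ((if j = ex k then (-1 : ℤ) else 0) - min (B j k) 0)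
          = min (B j k) 0 + max (B j k) 0 by ring, hmm]
      ring
    rw [Finset.sum_congr rfl hterm, hcompat k i, if_neg hi, neg_zero]
  refine ⟨heq, ?_⟩
  -- quasi-commutation in units
  have hA := monomial_quasi s hcs Λ X hXu aplus i
  have hB := monomial_quasi s hcs Λ X hXu aminus i
  have h1 : lambdaForm Λ aplus (e i) = ∑ j, Λ j i * aplus j := lambdaForm_single Λ aplus i
  have h2 : lambdaForm Λ aminus (e i) = ∑ j, Λ j i * aminus j := lambdaForm_single Λ aminus i
  have hAF : (quantumMonomial s Λ X aplus : F) * X i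
      = ((s ^ (2 * lambdaForm Λ aplus (e i)) : Fˣ) : F)
          * ((X i : F) * quantumMonomial s Λ X aplus) := by
    have := congrArg (Units.val) hA
    rw [h1]
    simpa [Units.val_mul, mul_assoc] using this
  have hBF : (quantumMonomial s Λ X aminus : F) * X i
      = ((s ^ (2 * lambdaForm Λ aplus (e i)) : Fˣ) : F)
          * ((X i : F) * quantumMonomial s Λ X aminus) := by
    have := congrArg (Units.val) hB
    rw [heq, h2]
    simpa [Units.val_mul, mul_assoc] using this
  simp only [X'k, add_mul, mul_add, hAF, hBF]
end
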